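/- arXiv:2602.09734 — 3 statements merged into one kernel-verified Lean document; each statement's English description precedes it below -/
import Mathlib

section
/- Let f be a banded Toeplitz symbol of bandwidth m with real coefficients, and suppose Z(f) is spanned by a polar curve with the non-confluence assumption in force. Let β : [−π, π] → ℝ be a continuously differentiable function such that e^{i(α + iβ(α))} ∈ Z(f) for every α ∈ [−π, π] (so that λ(α) := f(e^{i(α + iβ(α))}) is real-valued). Then the function α ↦ λ(α) is strictly monotone on the interval (−π, 0) and strictly monotone on the interval (0, π). -/
/-!
On `Z(f)` the symbol takes real values, so `α ↦ f(e^{i(α + iβ(α))})` is a real-valued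
function whose complex derivative `f'(z(α)) z'(α)` is real. Off the real axis (i.e. for
`sin α ≠ 0`) the non-confluence assumption gives `f'(z(α)) ≠ 0`, and `z'(α) = i z(α)(1 + iβ'(α))`
never vanishes, so the derivative of the band function never vanishes on `(-π, 0)` or `(0, π)`.
By Darboux's theorem it then has constant sign there.
-/

open Complex Polynomial
open scoped Real

/-- The banded Toeplitz symbol `f(z) = ∑_{k=-m}^m a_k z^{-k}`. -/
noncomputable def symb (m : ℕ) (a : ℤ → ℂ) (z : ℂ) : ℂ :=
  ∑ k ∈ Finset.Icc (-(m : ℤ)) (m : ℤ), a k * z ^ (-k)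

/-- The polynomial `z^m (f(z) - λ)` of degree `2m`. -/
noncomputable def symbPoly (m : ℕ) (a : ℤ → ℂ) (lam : ℂ) : Polynomial ℂ :=
  (∑ k ∈ Finset.Icc (-(m : ℤ)) (m : ℤ), Polynomial.C (a k) * Polynomial.X ^ ((m : ℤ) - k).toNat)
    - Polynomial.C lam * Polynomial.X ^ m

/-- `zs` enumerates the roots of `P` (with multiplicity) in order of increasing modulus. -/
def sortedRootEnum (m : ℕ) (P : Polynomial ℂ) (zs : Fin (2 * m) → ℂ) : Prop :=
  P.roots = Multiset.map zs Finset.univ.val ∧ Monotone fun i => ‖zs i‖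

/-- `Z(f)`: the set of middle roots `z_m(λ), z_{m+1}(λ)` over real `λ` with
`|z_m(λ)| = |z_{m+1}(λ)|`. -/
noncomputable def Zset (m : ℕ) (hm : 0 < m) (a : ℤ → ℂ) : Set ℂ :=
  {z : ℂ | ∃ lam : ℝ, ∃ zs : Fin (2 * m) → ℂ, sortedRootEnum m (symbPoly m a (lam : ℂ)) zs ∧
    ‖zs ⟨m - 1, by omega⟩‖ = ‖zs ⟨m, by omega⟩‖ ∧
    (z = zs ⟨m - 1, by omega⟩ ∨ z = zs ⟨m, by omega⟩)}

/-- The polar curve `p(e^{iθ}) = r(θ) e^{iθ}`. -/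
noncomputable def polarCurve (r : ℝ → ℝ) (θ : ℝ) : ℂ :=
  (r θ : ℂ) * Complex.exp (θ * Complex.I)

open Set Filter Topology

theorem strictMonoOn_or_strictAntiOn_of_hasDerivAt_ne_zero {s : Set ℝ} (hs : Convex ℝ s)
    {f f' : ℝ → ℝ} (hf : ∀ x ∈ s, HasDerivAt f (f' x) x) (hf' : ∀ x ∈ s, f' x ≠ 0) :
    StrictMonoOn f s ∨ StrictAntiOn f s := by
  have hcont : ContinuousOn f s := fun x hx => (hf x hx).continuousAt.continuousWithinAt
  have hf_int : ∀ x ∈ interior s, HasDerivWithinAt f (f' x) (interior s) x := fun x hx =>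
    (hf x (interior_subset hx)).hasDerivWithinAt
  rcases hasDerivWithinAt_forall_lt_or_forall_gt_of_forall_ne hs
    (fun x hx => (hf x hx).hasDerivWithinAt) hf' with hneg | hpos
  · exact .inr <| strictAntiOn_of_hasDerivWithinAt_neg hs hcont hf_int
      fun x hx => hneg x (interior_subset hx)
  · exact .inl <| strictMonoOn_of_hasDerivWithinAt_pos hs hcont hf_int
      fun x hx => hpos x (interior_subset hx)

theorem HasDerivAt.re_comp {F : ℝ → ℂ} {F' : ℂ} {x : ℝ} (hF : HasDerivAt F F' x) :
    HasDerivAt (fun y => (F y).re) F'.re x := by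
  simpa using! Complex.reCLM.hasFDerivAt.comp_hasDerivAt x hF

theorem HasDerivAt.im_comp {F : ℝ → ℂ} {F' : ℂ} {x : ℝ} (hF : HasDerivAt F F' x) :
    HasDerivAt (fun y => (F y).im) F'.im x := by
  simpa using! Complex.imCLM.hasFDerivAt.comp_hasDerivAt x hF

theorem HasDerivAt.im_eq_zero_of_eventually_im_eq_zero {F : ℝ → ℂ} {F' : ℂ} {x : ℝ}
    (hF : HasDerivAt F F' x) (hreal : ∀ᶠ y in 𝓝 x, (F y).im = 0) : F'.im = 0 :=
  hF.im_comp.unique ((hasDerivAt_const x 0).congr_of_eventuallyEq hreal)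

theorem strictMonoOn_or_strictAntiOn_re_comp {f : ℂ → ℂ} {γ γ' : ℝ → ℂ} {s : Set ℝ}
    (hs : Convex ℝ s) (hso : IsOpen s) (hγ : ∀ x ∈ s, HasDerivAt γ (γ' x) x)
    (hγ' : ∀ x ∈ s, γ' x ≠ 0) (hf : ∀ x ∈ s, DifferentiableAt ℂ f (γ x))
    (hf' : ∀ x ∈ s, deriv f (γ x) ≠ 0) (hreal : ∀ x ∈ s, (f (γ x)).im = 0) :
    StrictMonoOn (fun x => (f (γ x)).re) s ∨ StrictAntiOn (fun x => (f (γ x)).re) s := by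
  have hF : ∀ x ∈ s, HasDerivAt (fun y => f (γ y)) (deriv f (γ x) * γ' x) x := fun x hx =>
    (hf x hx).hasDerivAt.comp x (hγ x hx)
  refine strictMonoOn_or_strictAntiOn_of_hasDerivAt_ne_zero hs
    (fun x hx => (hF x hx).re_comp) fun x hx hre => mul_ne_zero (hf' x hx) (hγ' x hx) ?_
  have him := (hF x hx).im_eq_zero_of_eventually_im_eq_zero
    (eventually_of_mem (hso.mem_nhds hx) hreal)
  exact Complex.ext hre him

theorem eval_symbPoly (m : ℕ) (a : ℤ → ℂ) (lam : ℂ) {z : ℂ} (hz : z ≠ 0) :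
    (symbPoly m a lam).eval z = z ^ m * (symb m a z - lam) := by
  simp only [symbPoly, symb, eval_sub, eval_mul, eval_C, eval_pow, eval_X, eval_finsetSum,
    mul_sub, Finset.mul_sum]
  congr 1
  · refine Finset.sum_congr rfl fun k hk => ?_
    have hk' : 0 ≤ (m : ℤ) - k := by linarith [(Finset.mem_Icc.1 hk).2]
    rw [← zpow_natCast, Int.toNat_of_nonneg hk', sub_eq_add_neg, zpow_add₀ hz, zpow_natCast]
    ring
  · ring

theorem symb_im_eq_zero_of_mem_Zset {m : ℕ} {hm : 0 < m} {a : ℤ → ℂ} {z : ℂ} (hz0 : z ≠ 0)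
    (hz : z ∈ Zset m hm a) : (symb m a z).im = 0 := by
  obtain ⟨lam, zs, ⟨hroots, -⟩, -, hz⟩ := hz
  have hroot : z ∈ (symbPoly m a lam).roots := by
    rw [hroots]
    rcases hz with rfl | rfl <;> exact Multiset.mem_map_of_mem _ (Finset.mem_univ_val _)
  have heval : (symbPoly m a lam).eval z = 0 := (mem_roots'.1 hroot).2
  rw [eval_symbPoly m a _ hz0, mul_eq_zero, sub_eq_zero] at heval
  rcases heval with h | h
  · exact absurd (pow_eq_zero_iff hm.ne' |>.1 h) hz0
  · rw [h, ofReal_im]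

theorem differentiableAt_symb (m : ℕ) (a : ℤ → ℂ) {z : ℂ} (hz : z ≠ 0) :
    DifferentiableAt ℂ (symb m a) z := by
  unfold symb
  fun_prop (disch := exact .inl hz)

theorem hasDerivAt_cexp_I_mul_add_I_mul {β : ℝ → ℝ} {α : ℝ} (hβ : DifferentiableAt ℝ β α) :
    HasDerivAt (fun x : ℝ => exp (I * (x + I * β x)))
      (exp (I * (α + I * β α)) * (I * (1 + I * deriv β α))) α := by
  have hre : HasDerivAt (fun x : ℝ => (x : ℂ)) 1 α := by
    simpa using (hasDerivAt_id α).ofReal_comp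
  exact ((hre.add (hβ.hasDerivAt.ofReal_comp.const_mul I)).const_mul I).cexp

theorem im_cexp_I_mul_add_I_mul (α b : ℝ) :
    (exp (I * (α + I * b))).im = Real.exp (-b) * Real.sin α := by
  rw [exp_im]
  congr 1 <;> simp [mul_re, mul_im]

theorem band_function_strictMonoOn_or_strictAntiOn {m : ℕ} {hm : 0 < m} {a : ℤ → ℂ}
    (hnc : ∀ z ∈ Zset m hm a, z.im ≠ 0 → deriv (symb m a) z ≠ 0)
    {β : ℝ → ℝ} {s : Set ℝ} (hs : Convex ℝ s) (hso : IsOpen s) (hβ : DifferentiableOn ℝ β s)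
    (hmem : ∀ α ∈ s, exp (I * (α + I * β α)) ∈ Zset m hm a)
    (hsin : ∀ α ∈ s, Real.sin α ≠ 0) :
    StrictMonoOn (fun α : ℝ => (symb m a (exp (I * (α + I * β α)))).re) s ∨
      StrictAntiOn (fun α : ℝ => (symb m a (exp (I * (α + I * β α)))).re) s := by
  have him : ∀ α ∈ s, (exp (I * (α + I * β α))).im ≠ 0 := fun α hα => by
    rw [im_cexp_I_mul_add_I_mul]
    exact mul_ne_zero (Real.exp_pos _).ne' (hsin α hα)
  refine strictMonoOn_or_strictAntiOn_re_comp hs hso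
    (fun α hα => hasDerivAt_cexp_I_mul_add_I_mul ((hβ α hα).differentiableAt
      (hso.mem_nhds hα))) (fun α _ => ?_) (fun α _ => differentiableAt_symb m a (exp_ne_zero _))
    (fun α hα => hnc _ (hmem α hα) (him α hα))
    (fun α hα => symb_im_eq_zero_of_mem_Zset (exp_ne_zero _) (hmem α hα))
  refine mul_ne_zero (exp_ne_zero _) (mul_ne_zero I_ne_zero fun h => ?_)
  simpa using congrArg re h

theorem band_function_strictly_monotone_general
    (m : ℕ) (hm : 0 < m) (a : ℤ → ℂ)
    -- non-confluence assumption
    (hnc1 : ∀ z ∈ Zset m hm a, z.im ≠ 0 → deriv (symb m a) z ≠ 0)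
    -- the continuously differentiable imaginary part β of the quasimomentum
    (β : ℝ → ℝ) (hβ : ContDiffOn ℝ 1 β (Set.Icc (-Real.pi) Real.pi))
    (hmem : ∀ α ∈ Set.Icc (-Real.pi) Real.pi,
      Complex.exp (Complex.I * ((α : ℂ) + Complex.I * (β α : ℂ))) ∈ Zset m hm a) :
    (StrictMonoOn
        (fun α : ℝ => (symb m a (Complex.exp (Complex.I * ((α : ℂ) + Complex.I * (β α : ℂ))))).re)
        (Set.Ioo (-Real.pi) 0) ∨
      StrictAntiOn
        (fun α : ℝ => (symb m a (Complex.exp (Complex.I * ((α : ℂ) + Complex.I * (β α : ℂ))))).re)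
        (Set.Ioo (-Real.pi) 0)) ∧
    (StrictMonoOn
        (fun α : ℝ => (symb m a (Complex.exp (Complex.I * ((α : ℂ) + Complex.I * (β α : ℂ))))).re)
        (Set.Ioo 0 Real.pi) ∨
      StrictAntiOn
        (fun α : ℝ => (symb m a (Complex.exp (Complex.I * ((α : ℂ) + Complex.I * (β α : ℂ))))).re)
        (Set.Ioo 0 Real.pi)) := by
  have hβ' := hβ.differentiableOn one_ne_zero
  have hlower : Ioo (-π) 0 ⊆ Icc (-π) π :=
    Ioo_subset_Icc_self.trans (Icc_subset_Icc_right Real.pi_pos.le)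
  have hupper : Ioo 0 π ⊆ Icc (-π) π :=
    Ioo_subset_Icc_self.trans (Icc_subset_Icc_left (neg_nonpos.2 Real.pi_pos.le))
  exact ⟨band_function_strictMonoOn_or_strictAntiOn hnc1 (convex_Ioo _ _) isOpen_Ioo
      (hβ'.mono hlower) (fun α hα => hmem α (hlower hα))
      fun α hα => (Real.sin_neg_of_neg_of_neg_pi_lt hα.2 hα.1).ne,
    band_function_strictMonoOn_or_strictAntiOn hnc1 (convex_Ioo _ _) isOpen_Ioo
      (hβ'.mono hupper) (fun α hα => hmem α (hupper hα))
      fun α hα => (Real.sin_pos_of_pos_of_lt_pi hα.1 hα.2).ne'⟩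

theorem band_function_strictly_monotone
    (m : ℕ) (hm : 0 < m) (a : ℤ → ℂ)
    -- real coefficients
    (hreal : ∀ k, (a k).im = 0)
    -- bandwidth exactly m
    (ham : a (m : ℤ) ≠ 0) (hamneg : a (-(m : ℤ)) ≠ 0)
    -- the polar curve spanning Z(f)
    (r : ℝ → ℝ)
    (hrc : ContinuousOn r (Set.Icc (-Real.pi) Real.pi))
    (hrpos : ∀ θ ∈ Set.Icc (-Real.pi) Real.pi, 0 < r θ)
    (hrclosed : r (-Real.pi) = r Real.pi)
    (hspan : Zset m hm a = polarCurve r '' Set.Icc (-Real.pi) Real.pi)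
    -- non-confluence assumption
    (hnc1 : ∀ z ∈ Zset m hm a, z.im ≠ 0 → deriv (symb m a) z ≠ 0)
    (hnc2 : ∀ z ∈ Zset m hm a, z.im = 0 → deriv (deriv (symb m a)) z ≠ 0)
    -- the continuously differentiable imaginary part β of the quasimomentum
    (β : ℝ → ℝ) (hβ : ContDiffOn ℝ 1 β (Set.Icc (-Real.pi) Real.pi))
    (hmem : ∀ α ∈ Set.Icc (-Real.pi) Real.pi,
      Complex.exp (Complex.I * ((α : ℂ) + Complex.I * (β α : ℂ))) ∈ Zset m hm a) :
    (StrictMonoOn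
        (fun α : ℝ => (symb m a (Complex.exp (Complex.I * ((α : ℂ) + Complex.I * (β α : ℂ))))).re)
        (Set.Ioo (-Real.pi) 0) ∨
      StrictAntiOn
        (fun α : ℝ => (symb m a (Complex.exp (Complex.I * ((α : ℂ) + Complex.I * (β α : ℂ))))).re)
        (Set.Ioo (-Real.pi) 0)) ∧
    (StrictMonoOn
        (fun α : ℝ => (symb m a (Complex.exp (Complex.I * ((α : ℂ) + Complex.I * (β α : ℂ))))).re)
        (Set.Ioo 0 Real.pi) ∨
      StrictAntiOn
        (fun α : ℝ => (symb m a (Complex.exp (Complex.I * ((α : ℂ) + Complex.I * (β α : ℂ))))).re)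
        (Set.Ioo 0 Real.pi)) :=
  band_function_strictly_monotone_general m hm a hnc1 β hβ hmem
end

section
/- Let (A_n) and (B_n) be sequences of matrices, A_n and B_n of size n×n with complex entries, such that sup_n ‖A_n‖_op < ∞ and sup_n ‖B_n‖_op < ∞, and such that (1/n)‖A_n − B_n‖_F² → 0 as n → ∞, where ‖·‖_F is the Frobenius norm. Then for every s ∈ ℕ, (1/n)(tr(A_n^s) − tr(B_n^s)) → 0 as n → ∞; equivalently, denoting by a_{n,1}, …, a_{n,n} and b_{n,1}, …, b_{n,n} the eigenvalues of A_n and B_n (with multiplicity), the normalized power sums satisfy (1/n)∑_{k=1}^n a_{n,k}^s − (1/n)∑_{k=1}^n b_{n,k}^s → 0, so whenever one of the limits lim_n (1/n)∑_k a_{n,k}^s, lim_n (1/n)∑_k b_{n,k}^s exists, both exist and are equal. -/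
/-!
Write `tr(A^s) - tr(B^s)` as the telescoping sum of `tr(B^(s-1-k) A^k (A - B))`. By
Cauchy–Schwarz each term is at most `‖B^(s-1-k) A^k‖_F ‖A - B‖_F`, and a Frobenius norm is at
most `√n` times the operator norm, so `(1/n)|tr(A^s) - tr(B^s)| ≤ s C^(s-1) √((1/n)‖A - B‖_F²)`
when `C` bounds both operator norms.
-/

open Filter Finset Topology

theorem pow_sub_pow_eq_sum_pow_mul_sub_mul_pow {R : Type*} [Ring R] (a b : R) (s : ℕ) :
    a ^ s - b ^ s = ∑ k ∈ range s, a ^ k * (a - b) * b ^ (s - 1 - k) := by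
  calc a ^ s - b ^ s
        = ∑ k ∈ range s, (a ^ (k + 1) * b ^ (s - (k + 1)) - a ^ k * b ^ (s - k)) := by
        rw [sum_range_sub (fun k => a ^ k * b ^ (s - k))]; simp
    _ = _ := sum_congr rfl fun k hk => by
        obtain ⟨j, rfl⟩ := Nat.exists_eq_add_of_lt (mem_range.mp hk)
        rw [show k + j + 1 - (k + 1) = j by omega, show k + j + 1 - k = j + 1 by omega,
          show k + j + 1 - 1 - k = j by omega, pow_succ, pow_succ']
        noncomm_ring

theorem ContinuousLinearMap.norm_pow_le_pow_norm {𝕜 E : Type*} [NontriviallyNormedField 𝕜]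
    [SeminormedAddCommGroup E] [NormedSpace 𝕜 E] (f : E →L[𝕜] E) (k : ℕ) :
    ‖f ^ k‖ ≤ ‖f‖ ^ k := by
  rcases k.eq_zero_or_pos with rfl | hk
  · rw [pow_zero, pow_zero]
    exact norm_id_le
  · exact norm_pow_le' f hk

theorem Matrix.norm_trace_mul_le {α m n : Type*} [SeminormedRing α] [Fintype m] [Fintype n]
    (X : Matrix m n α) (Y : Matrix n m α) :
    ‖(X * Y).trace‖ ≤ √(∑ i, ∑ j, ‖X i j‖ ^ 2) * √(∑ i, ∑ j, ‖Y i j‖ ^ 2) :=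
  calc ‖(X * Y).trace‖ = ‖∑ i, ∑ j, X i j * Y j i‖ := rfl
    _ ≤ ∑ i, ∑ j, ‖X i j‖ * ‖Y j i‖ :=
      (norm_sum_le _ _).trans <| sum_le_sum fun i _ =>
        (norm_sum_le _ _).trans <| sum_le_sum fun j _ => norm_mul_le _ _
    _ = ∑ p : m × n, ‖X p.1 p.2‖ * ‖Y p.2 p.1‖ :=
      (Fintype.sum_prod_type fun p => ‖X p.1 p.2‖ * ‖Y p.2 p.1‖).symm
    _ ≤ √(∑ p : m × n, ‖X p.1 p.2‖ ^ 2) * √(∑ p : m × n, ‖Y p.2 p.1‖ ^ 2) :=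
      Real.sum_mul_le_sqrt_mul_sqrt _ _ _
    _ = √(∑ i, ∑ j, ‖X i j‖ ^ 2) * √(∑ i, ∑ j, ‖Y i j‖ ^ 2) := by
      rw [Fintype.sum_prod_type, Fintype.sum_prod_type, Finset.sum_comm (γ := n)]

section

variable {𝕜 ι : Type*} [RCLike 𝕜] [Fintype ι] [DecidableEq ι]

theorem Matrix.sum_norm_sq_le_norm_toEuclideanCLM_sq (M : Matrix ι ι 𝕜) (j : ι) :
    ∑ i, ‖M i j‖ ^ 2 ≤ ‖toEuclideanCLM (𝕜 := 𝕜) M‖ ^ 2 := by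
  set T := toEuclideanCLM (𝕜 := 𝕜) M
  have hcol : T (WithLp.toLp 2 (Pi.single j 1)) = WithLp.toLp 2 fun i => M i j := by
    rw [toEuclideanCLM_toLp, mulVec_single_one]; rfl
  calc ∑ i, ‖M i j‖ ^ 2 = ‖T (WithLp.toLp 2 (Pi.single j 1))‖ ^ 2 := by
        rw [hcol, EuclideanSpace.norm_sq_eq]
    _ ≤ (‖T‖ * ‖WithLp.toLp 2 (Pi.single j (1 : 𝕜))‖) ^ 2 := by gcongr; exact T.le_opNorm _
    _ = ‖T‖ ^ 2 := by simp [PiLp.toLp_single]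

theorem Matrix.sum_sum_norm_sq_le_card_mul_norm_toEuclideanCLM_sq (M : Matrix ι ι 𝕜) :
    ∑ i, ∑ j, ‖M i j‖ ^ 2 ≤ Fintype.card ι * ‖toEuclideanCLM (𝕜 := 𝕜) M‖ ^ 2 := by
  rw [Finset.sum_comm, ← nsmul_eq_mul, ← Finset.card_univ, ← Finset.sum_const]
  exact sum_le_sum fun j _ => M.sum_norm_sq_le_norm_toEuclideanCLM_sq j

theorem Matrix.norm_trace_mul_le_sqrt_card_mul (X Y : Matrix ι ι 𝕜) :
    ‖(X * Y).trace‖ ≤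
      √(Fintype.card ι) * ‖toEuclideanCLM (𝕜 := 𝕜) X‖ * √(∑ i, ∑ j, ‖Y i j‖ ^ 2) := by
  refine (X.norm_trace_mul_le Y).trans (mul_le_mul_of_nonneg_right ?_ (Real.sqrt_nonneg _))
  calc √(∑ i, ∑ j, ‖X i j‖ ^ 2) ≤ √(Fintype.card ι * ‖toEuclideanCLM (𝕜 := 𝕜) X‖ ^ 2) :=
        Real.sqrt_le_sqrt X.sum_sum_norm_sq_le_card_mul_norm_toEuclideanCLM_sq
    _ = √(Fintype.card ι) * ‖toEuclideanCLM (𝕜 := 𝕜) X‖ := by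
        rw [Real.sqrt_mul (Nat.cast_nonneg _), Real.sqrt_sq (norm_nonneg _)]

theorem Matrix.norm_toEuclideanCLM_pow_mul_pow_le {A B : Matrix ι ι 𝕜} {C : ℝ}
    (hA : ‖toEuclideanCLM (𝕜 := 𝕜) A‖ ≤ C) (hB : ‖toEuclideanCLM (𝕜 := 𝕜) B‖ ≤ C) (a b : ℕ) :
    ‖toEuclideanCLM (𝕜 := 𝕜) (A ^ a * B ^ b)‖ ≤ C ^ (a + b) := by
  rw [map_mul, map_pow, map_pow, pow_add]
  refine (norm_mul_le _ _).trans (mul_le_mul ?_ ?_ (norm_nonneg _) ?_)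
  · exact (ContinuousLinearMap.norm_pow_le_pow_norm _ a).trans
      (pow_le_pow_left₀ (norm_nonneg _) hA a)
  · exact (ContinuousLinearMap.norm_pow_le_pow_norm _ b).trans
      (pow_le_pow_left₀ (norm_nonneg _) hB b)
  · exact pow_nonneg ((norm_nonneg _).trans hA) a

theorem Matrix.norm_trace_pow_sub_trace_pow_le {A B : Matrix ι ι 𝕜} {C : ℝ}
    (hA : ‖toEuclideanCLM (𝕜 := 𝕜) A‖ ≤ C) (hB : ‖toEuclideanCLM (𝕜 := 𝕜) B‖ ≤ C) (s : ℕ) :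
    ‖(A ^ s).trace - (B ^ s).trace‖ ≤
      s * (√(Fintype.card ι) * C ^ (s - 1) * √(∑ i, ∑ j, ‖(A - B) i j‖ ^ 2)) := by
  have hterm : ∀ k ∈ range s, ‖(A ^ k * (A - B) * B ^ (s - 1 - k)).trace‖ ≤
      √(Fintype.card ι) * C ^ (s - 1) * √(∑ i, ∑ j, ‖(A - B) i j‖ ^ 2) := by
    intro k hk
    rw [trace_mul_cycle]
    refine (norm_trace_mul_le_sqrt_card_mul _ _).trans ?_
    gcongr
    simpa [show s - 1 - k + k = s - 1 by grind]
      using norm_toEuclideanCLM_pow_mul_pow_le hB hA (s - 1 - k) k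
  calc ‖(A ^ s).trace - (B ^ s).trace‖
      = ‖∑ k ∈ range s, (A ^ k * (A - B) * B ^ (s - 1 - k)).trace‖ := by
        rw [← trace_sub, pow_sub_pow_eq_sum_pow_mul_sub_mul_pow, trace_sum]
    _ ≤ ∑ k ∈ range s, ‖(A ^ k * (A - B) * B ^ (s - 1 - k)).trace‖ := norm_sum_le _ _
    _ ≤ _ := by simpa using sum_le_card_nsmul _ _ _ hterm

theorem Matrix.norm_inv_card_mul_trace_pow_sub_le {A B : Matrix ι ι 𝕜} {C : ℝ}
    (hA : ‖toEuclideanCLM (𝕜 := 𝕜) A‖ ≤ C) (hB : ‖toEuclideanCLM (𝕜 := 𝕜) B‖ ≤ C) (s : ℕ) :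
    ‖(Fintype.card ι : 𝕜)⁻¹ * ((A ^ s).trace - (B ^ s).trace)‖ ≤
      s * C ^ (s - 1) * √((Fintype.card ι : ℝ)⁻¹ * ∑ i, ∑ j, ‖(A - B) i j‖ ^ 2) := by
  set N : ℝ := (Fintype.card ι : ℝ)
  have hN : N⁻¹ * √N = √N⁻¹ := by rw [Real.sqrt_inv, ← div_eq_inv_mul, Real.sqrt_div_self]
  rw [norm_mul, norm_inv, RCLike.norm_natCast, Real.sqrt_mul (inv_nonneg.mpr (Nat.cast_nonneg _))]
  calc N⁻¹ * ‖(A ^ s).trace - (B ^ s).trace‖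
      ≤ N⁻¹ * (s * (√N * C ^ (s - 1) * √(∑ i, ∑ j, ‖(A - B) i j‖ ^ 2))) := by
        gcongr; exact norm_trace_pow_sub_trace_pow_le hA hB s
    _ = s * C ^ (s - 1) * (√N⁻¹ * √(∑ i, ∑ j, ‖(A - B) i j‖ ^ 2)) := by
        rw [← hN]; ring

end

theorem Filter.Tendsto.nhds_iff_of_tendsto_sub_nhds_zero {α E : Type*}
    [SeminormedAddCommGroup E] {l : Filter α} {f g : α → E}
    (hfg : Tendsto (fun x => f x - g x) l (𝓝 0)) (a : E) :
    Tendsto f l (𝓝 a) ↔ Tendsto g l (𝓝 a) :=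
  ⟨fun hf => by simpa using hf.sub hfg, fun hg => by simpa using hg.add hfg⟩

theorem asymptotically_equivalent_matrices_have_equal_moments
    (A B : (n : ℕ) → Matrix (Fin n) (Fin n) ℂ)
    -- uniformly bounded operator norms
    (hA : ∃ C : ℝ, ∀ n, ‖Matrix.toEuclideanCLM (𝕜 := ℂ) (A n)‖ ≤ C)
    (hB : ∃ C : ℝ, ∀ n, ‖Matrix.toEuclideanCLM (𝕜 := ℂ) (B n)‖ ≤ C)
    -- normalized Frobenius distance tends to zero
    (hF : Tendsto (fun n : ℕ => (1 / (n : ℝ)) * ∑ i, ∑ j, ‖(A n - B n) i j‖ ^ 2)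
      atTop (nhds 0)) :
    ∀ s : ℕ,
      Tendsto (fun n : ℕ => ((n : ℂ))⁻¹ * ((A n ^ s).trace - (B n ^ s).trace))
        atTop (nhds 0) ∧
      ∀ L : ℂ,
        Tendsto (fun n : ℕ => ((n : ℂ))⁻¹ * (A n ^ s).trace) atTop (nhds L) ↔
        Tendsto (fun n : ℕ => ((n : ℂ))⁻¹ * (B n ^ s).trace) atTop (nhds L) := by
  obtain ⟨CA, hCA⟩ := hA
  obtain ⟨CB, hCB⟩ := hB
  intro s
  have hdiff : Tendsto (fun n : ℕ => ((n : ℂ))⁻¹ * ((A n ^ s).trace - (B n ^ s).trace))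
      atTop (𝓝 0) := by
    refine squeeze_zero_norm (fun n => ?_)
      (by simpa using hF.sqrt.const_mul (s * max CA CB ^ (s - 1)))
    simpa using Matrix.norm_inv_card_mul_trace_pow_sub_le ((hCA n).trans (le_max_left CA CB))
      ((hCB n).trans (le_max_right CA CB)) s
  refine ⟨hdiff, ?_⟩
  simp only [mul_sub] at hdiff
  exact hdiff.nhds_iff_of_tendsto_sub_nhds_zero
end

section
/- Let f be a banded Toeplitz symbol of bandwidth m. Then for every n ≥ 1, every eigenvalue of the finite Toeplitz matrix T_n(f) lies in the convex hull of the range of the symbol on the unit circle, i.e., σ(T_n(f)) ⊆ conv{f(e^{iθ}) : θ ∈ [0, 2π)}. -/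
/-!
If `T_n(f) x = μ x` with `x ≠ 0`, put `q(z) = ∑ⱼ xⱼ z^{-j}`. On the unit circle `|q|² f` is a
trigonometric polynomial of degree `< m + n` whose mean value is `⟨T_n(f) x, x⟩ = μ ⟨x, x⟩`, while
that of `|q|²` is `⟨x, x⟩`. Both means are computed exactly by averaging over the `N`-th roots of
unity `ζᵗ` for any `N ≥ m + n`, so `μ` is the centre of mass of the values `f(ζᵗ)` with the
nonnegative weights `|q(ζᵗ)|²`.
-/

open Complex Polynomial
open scoped Real

/-- The finite Toeplitz matrix `T_n(f)` with (i,j)-entry `a_{i-j}`. -/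
noncomputable def toepMat (n : ℕ) (a : ℤ → ℂ) : Matrix (Fin n) (Fin n) ℂ :=
  Matrix.of fun i j => a ((i : ℤ) - (j : ℤ))

open Finset ComplexConjugate
open scoped Matrix ComplexOrder

theorem IsPrimitiveRoot.geom_sum_zpow {K : Type*} [Field K] {ζ : K} {N : ℕ}
    (hζ : IsPrimitiveRoot ζ N) {d : ℤ} (hd : |d| < N) :
    ∑ t ∈ range N, (ζ ^ d) ^ t = if d = 0 then (N : K) else 0 := by
  split_ifs with h0
  · simp [h0]
  · have hne : ζ ^ d ≠ 1 := fun h =>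
      h0 (Int.eq_zero_of_abs_lt_dvd ((hζ.zpow_eq_one_iff_dvd d).1 h) hd)
    rw [geom_sum_eq hne, ← zpow_natCast, ← zpow_mul, mul_comm, zpow_mul, zpow_natCast,
      hζ.pow_eq_one, one_zpow, sub_self, zero_div]

theorem conj_zpow_of_norm_eq_one {z : ℂ} (hz : ‖z‖ = 1) (k : ℤ) :
    conj (z ^ k) = z ^ (-k) := by
  rw [map_zpow₀, ← inv_eq_conj hz, inv_zpow, zpow_neg]

noncomputable def trigPoly {n : ℕ} (x : Fin n → ℂ) (z : ℂ) : ℂ :=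
  ∑ j, x j * z ^ (-(j : ℤ))

theorem normSq_trigPoly {n : ℕ} (x : Fin n → ℂ) {z : ℂ} (hz : ‖z‖ = 1) :
    (normSq (trigPoly x z) : ℂ) =
      ∑ i, ∑ j, conj (x i) * x j * z ^ ((i : ℤ) - j) := by
  have hz0 : z ≠ 0 := norm_ne_zero_iff.1 (by rw [hz]; exact one_ne_zero)
  rw [trigPoly, normSq_eq_conj_mul_self, map_sum, sum_mul_sum]
  refine sum_congr rfl fun i _ => sum_congr rfl fun j _ => ?_
  rw [map_mul, conj_zpow_of_norm_eq_one hz, neg_neg, sub_eq_add_neg, zpow_add₀ hz0]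
  ring

theorem sum_zpow_mul_symb {ζ : ℂ} {N m : ℕ} (hζ : IsPrimitiveRoot ζ N) {a : ℤ → ℂ}
    (hband : ∀ k : ℤ, (m : ℤ) < |k| → a k = 0) {d : ℤ} (hd : |d| + m < N) :
    ∑ t ∈ range N, (ζ ^ t) ^ d * symb m a (ζ ^ t) = N * a d := by
  have hζ0 : ζ ≠ 0 := hζ.ne_zero (by have := abs_nonneg d; omega)
  have hterm : ∀ (t : ℕ) (k : ℤ),
      (ζ ^ t) ^ d * (a k * (ζ ^ t) ^ (-k)) = a k * (ζ ^ (d - k)) ^ t := by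
    intro t k
    simp only [← zpow_natCast, ← zpow_mul]
    rw [mul_left_comm, ← zpow_add₀ hζ0]
    ring_nf
  have horth : ∀ k ∈ Icc (-(m : ℤ)) m,
      ∑ t ∈ range N, (ζ ^ (d - k)) ^ t = if k = d then (N : ℂ) else 0 := by
    intro k hk
    have hk' : |k| ≤ m := abs_le.2 (mem_Icc.1 hk)
    rw [hζ.geom_sum_zpow ((abs_sub d k).trans_lt (by omega))]
    simp only [sub_eq_zero, eq_comm]
  simp_rw [symb, mul_sum, hterm]
  rw [sum_comm]
  simp_rw [← mul_sum]
  rw [sum_congr rfl fun k hk => by rw [horth k hk]]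
  simp only [mul_ite, mul_zero]
  rw [sum_ite_eq']
  split_ifs with hmem
  · ring
  · rw [hband d (by rw [mem_Icc, ← abs_le] at hmem; omega), mul_zero]

theorem sum_normSq_trigPoly_mul_symb {ζ : ℂ} {N m n : ℕ} (hζ : IsPrimitiveRoot ζ N)
    (hmn : m + n ≤ N) {a : ℤ → ℂ} (hband : ∀ k : ℤ, (m : ℤ) < |k| → a k = 0) (x : Fin n → ℂ) :
    ∑ t ∈ range N, (normSq (trigPoly x (ζ ^ t)) : ℂ) * symb m a (ζ ^ t) =
      N * (star x ⬝ᵥ toepMat n a *ᵥ x) := by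
  have hcircle : ∀ t ∈ range N, ‖ζ ^ t‖ = 1 := fun t ht => by
    rw [norm_pow, hζ.norm'_eq_one (Nat.ne_zero_of_lt (mem_range.1 ht)), one_pow]
  rw [sum_congr rfl fun t ht => by rw [normSq_trigPoly x (hcircle t ht)]]
  simp_rw [sum_mul, mul_assoc]
  simp only [dotProduct, Matrix.mulVec, toepMat, Matrix.of_apply, mul_sum, Pi.star_apply,
    RCLike.star_def]
  rw [sum_comm]
  refine sum_congr rfl fun i _ => ?_
  rw [sum_comm]
  refine sum_congr rfl fun j _ => ?_
  have hij : |(i : ℤ) - j| < n := abs_sub_lt_iff.2 ⟨by omega, by omega⟩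
  rw [← mul_sum, ← mul_sum, sum_zpow_mul_symb hζ hband (by omega)]
  ring

theorem symb_single_zero (m : ℕ) (z : ℂ) : symb m (Pi.single 0 1) z = 1 := by
  rw [symb, sum_eq_single 0] <;> simp_all

theorem toepMat_single_zero (n : ℕ) : toepMat n (Pi.single 0 1) = 1 := by
  ext i j
  simp [toepMat, Matrix.one_apply, Pi.single_apply, sub_eq_zero, Fin.val_inj]

theorem sum_normSq_trigPoly {ζ : ℂ} {N n : ℕ} (hζ : IsPrimitiveRoot ζ N) (hn : n ≤ N)
    (x : Fin n → ℂ) :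
    ∑ t ∈ range N, (normSq (trigPoly x (ζ ^ t)) : ℂ) = N * (star x ⬝ᵥ x) := by
  have h := sum_normSq_trigPoly_mul_symb hζ (m := 0) (by omega) (a := Pi.single 0 1)
    (fun k hk => Pi.single_eq_of_ne (abs_pos.1 (by exact_mod_cast hk)) 1) x
  simpa [symb_single_zero, toepMat_single_zero] using h

theorem Matrix.exists_mulVec_eq_smul_of_mem_spectrum {K ι : Type*} [Field K] [Fintype ι]
    [DecidableEq ι] {A : Matrix ι ι K} {μ : K} (hμ : μ ∈ spectrum K A) :
    ∃ x ≠ 0, A *ᵥ x = μ • x := by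
  rw [← Matrix.spectrum_toLin', ← Module.End.hasEigenvalue_iff_mem_spectrum] at hμ
  obtain ⟨x, hx, hx0⟩ := hμ.exists_hasEigenvector
  exact ⟨x, hx0, by simpa using Module.End.mem_eigenspace_iff.1 hx⟩

theorem exists_mem_Ico_exp_mul_I_eq_pow {N t : ℕ} (ht : t < N) :
    ∃ θ ∈ Set.Ico 0 (2 * π), exp (θ * I) = exp (2 * π * I / N) ^ t := by
  have htN : (t : ℝ) < N := by exact_mod_cast ht
  refine ⟨2 * π * t / N, ⟨by positivity, ?_⟩, ?_⟩
  · rw [div_lt_iff₀ (t.cast_nonneg.trans_lt htN)]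
    nlinarith [Real.pi_pos]
  · rw [← exp_nat_mul]
    push_cast
    ring_nf

theorem mem_convexHull_of_sum_smul_eq {ι E : Type*} [AddCommGroup E] [Module ℝ E]
    {s : Finset ι} {w : ι → ℝ} {z : ι → E} {S : Set E} {μ : E} (hw : ∀ i ∈ s, 0 ≤ w i)
    (hws : 0 < ∑ i ∈ s, w i) (hz : ∀ i ∈ s, z i ∈ S)
    (hμ : ∑ i ∈ s, w i • z i = (∑ i ∈ s, w i) • μ) :
    μ ∈ convexHull ℝ S := by
  have : s.centerMass w z = μ := by
    rw [centerMass, hμ, smul_smul, inv_mul_cancel₀ hws.ne', one_smul]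
  exact this ▸ s.centerMass_mem_convexHull hw hws hz

theorem eigenvalues_in_convex_hull_of_symbol_range_general
    (m : ℕ) (a : ℤ → ℂ)
    (hband : ∀ k : ℤ, (m : ℤ) < |k| → a k = 0)
    (n : ℕ) :
    spectrum ℂ (toepMat n a) ⊆
      convexHull ℝ
        ((fun θ : ℝ => symb m a (Complex.exp (θ * Complex.I))) '' Set.Ico 0 (2 * Real.pi)) := by
  intro μ hμ
  obtain ⟨x, hx0, hx⟩ := Matrix.exists_mulVec_eq_smul_of_mem_spectrum hμ
  -- any `N ≥ m + n` would do; the `+ 1` keeps `N ≠ 0`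
  set N := m + n + 1
  set ζ := exp (2 * π * I / N)
  have hζ : IsPrimitiveRoot ζ N := isPrimitiveRoot_exp N (by omega)
  set w : ℕ → ℝ := fun t => normSq (trigPoly x (ζ ^ t))
  have hsymb := sum_normSq_trigPoly_mul_symb hζ (by omega) hband x
  have hmass : ∑ t ∈ range N, (w t : ℂ) = N * (star x ⬝ᵥ x) := sum_normSq_trigPoly hζ (by omega) x
  rw [hx, dotProduct_smul] at hsymb
  have hws : 0 < ∑ t ∈ range N, w t := by
    have hne : ∑ t ∈ range N, (w t : ℂ) ≠ 0 := by
      rw [hmass]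
      exact mul_ne_zero (by norm_cast) (dotProduct_star_self_eq_zero.not.2 hx0)
    refine (sum_nonneg fun t _ => normSq_nonneg _).lt_of_ne' fun h => hne ?_
    exact_mod_cast h
  refine mem_convexHull_of_sum_smul_eq (z := fun t => symb m a (ζ ^ t))
    (fun t _ => normSq_nonneg _) hws (fun t ht => ?_) ?_
  · obtain ⟨θ, hθ, hexp⟩ := exists_mem_Ico_exp_mul_I_eq_pow (mem_range.1 ht)
    exact ⟨θ, hθ, congrArg (symb m a) hexp⟩
  · simp only [real_smul]
    push_cast
    rw [hsymb, hmass, smul_eq_mul]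
    ring

theorem eigenvalues_in_convex_hull_of_symbol_range
    (m : ℕ) (hm : 0 < m) (a : ℤ → ℂ)
    (ham : a (m : ℤ) ≠ 0) (hamneg : a (-(m : ℤ)) ≠ 0)
    (hband : ∀ k : ℤ, (m : ℤ) < |k| → a k = 0)
    (n : ℕ) (hn : 1 ≤ n) :
    spectrum ℂ (toepMat n a) ⊆
      convexHull ℝ
        ((fun θ : ℝ => symb m a (Complex.exp (θ * Complex.I))) '' Set.Ico 0 (2 * Real.pi)) :=
  eigenvalues_in_convex_hull_of_symbol_range_general m a hband n
end
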